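/- arXiv:cs/9808002 — 3 statements merged into one kernel-verified Lean document; each statement's English description precedes it below -/
import Mathlib

section
/- Telescoping normal form: if 𝒞 is closed under binary unions and binary intersections, then for every m ≥ 1 and every L ∈ DIFF_m(𝒞) there exist sets L₁, L₂, …, L_m ∈ 𝒞 with L₁ ⊇ L₂ ⊇ ⋯ ⊇ L_m such that L = L₁ \ (L₂ \ (L₃ \ ⋯ (L_{m-1} \ L_m) ⋯ )). -/
def DIFF {α : Type*} (𝒞 : Set (Set α)) : ℕ → Set (Set α)
  | 0 => ∅
  | 1 => 𝒞
  | (k + 2) => { L | ∃ L₁ ∈ 𝒞, ∃ L₂ ∈ DIFF 𝒞 (k + 1), L = L₁ \ L₂ }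

def telescope {α : Type*} : List (Set α) → Set α
  | [] => ∅
  | [L] => L
  | L :: L' :: rest => L \ telescope (L' :: rest)

/-!
Induct on `m`. If `L₂ = telescope [M₁, …, Mₘ]` with `M₁ ⊇ ⋯ ⊇ Mₘ`, then intersecting every
term with `L₁` commutes with `telescope`, and `L₁ \ X = L₁ \ (L₁ ∩ X)`, so
`L₁ \ L₂ = telescope [L₁, L₁ ∩ M₁, …, L₁ ∩ Mₘ]`, again a decreasing chain in `𝒞` since `𝒞` is
closed under intersections.
-/

section Telescope

variable {α : Type*}

theorem telescope_map_inter (A : Set α) : ∀ Ls : List (Set α),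
    telescope (Ls.map (A ∩ ·)) = A ∩ telescope Ls
  | [] => by simp [telescope]
  | [_] => rfl
  | L :: L' :: rest => by
    change (A ∩ L) \ telescope ((L' :: rest).map (A ∩ ·)) = A ∩ (L \ telescope (L' :: rest))
    rw [telescope_map_inter A (L' :: rest), Set.inter_sdiff_distrib_left]

theorem diff_telescope_eq_telescope_cons_map_inter (A : Set α) {Ls : List (Set α)}
    (hLs : Ls ≠ []) : A \ telescope Ls = telescope (A :: Ls.map (A ∩ ·)) := by
  obtain ⟨M, rest, rfl⟩ := List.exists_cons_of_ne_nil hLs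
  change A \ telescope (M :: rest) = A \ telescope ((M :: rest).map (A ∩ ·))
  rw [telescope_map_inter, Set.sdiff_self_inter]

theorem isChain_cons_map_inter (A : Set α) {Ls : List (Set α)}
    (hLs : List.IsChain (· ⊇ ·) Ls) : List.IsChain (· ⊇ ·) (A :: Ls.map (A ∩ ·)) := by
  have hmap : List.IsChain (· ⊇ ·) (Ls.map (A ∩ ·)) :=
    List.isChain_map _ |>.mpr <| hLs.imp fun _ _ h => Set.inter_subset_inter_right A h
  refine hmap.cons fun B hB => ?_
  obtain ⟨M, -, rfl⟩ := List.mem_map.mp (List.mem_of_mem_head? hB)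
  exact Set.inter_subset_left

end Telescope

theorem exists_telescope_of_mem_DIFF_succ {α : Type*} {𝒞 : Set (Set α)}
    (hinter : ∀ A ∈ 𝒞, ∀ B ∈ 𝒞, A ∩ B ∈ 𝒞) :
    ∀ (m : ℕ), ∀ L ∈ DIFF 𝒞 (m + 1), ∃ Ls : List (Set α),
      Ls.length = m + 1 ∧ (∀ A ∈ Ls, A ∈ 𝒞) ∧ List.IsChain (· ⊇ ·) Ls ∧ L = telescope Ls
  | 0, L, hL => ⟨[L], rfl, by simpa [DIFF] using hL, List.isChain_singleton _, rfl⟩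
  | m + 1, _, ⟨L₁, hL₁, L₂, hL₂, rfl⟩ => by
    obtain ⟨Ms, hlen, hmem, hchain, rfl⟩ := exists_telescope_of_mem_DIFF_succ hinter m L₂ hL₂
    have hMs : Ms ≠ [] := List.ne_nil_of_length_eq_add_one hlen
    refine ⟨L₁ :: Ms.map (L₁ ∩ ·), by simp [hlen], ?_, isChain_cons_map_inter L₁ hchain,
      diff_telescope_eq_telescope_cons_map_inter L₁ hMs⟩
    simp only [List.mem_cons, List.mem_map]
    rintro A (rfl | ⟨M, hM, rfl⟩)
    · exact hL₁
    · exact hinter _ hL₁ _ (hmem M hM)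

theorem stmt11_general {α : Type*} (𝒞 : Set (Set α))
    (hinter : ∀ A ∈ 𝒞, ∀ B ∈ 𝒞, A ∩ B ∈ 𝒞) :
    ∀ m ≥ 1, ∀ L ∈ DIFF 𝒞 m, ∃ Ls : List (Set α),
      Ls.length = m ∧ (∀ A ∈ Ls, A ∈ 𝒞) ∧ List.Chain' (· ⊇ ·) Ls ∧
      L = telescope Ls := by
  intro m hm
  obtain ⟨k, rfl⟩ := Nat.exists_eq_add_of_le' hm
  exact exists_telescope_of_mem_DIFF_succ hinter k

theorem stmt11 {α : Type*} (𝒞 : Set (Set α))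
    (hunion : ∀ A ∈ 𝒞, ∀ B ∈ 𝒞, A ∪ B ∈ 𝒞)
    (hinter : ∀ A ∈ 𝒞, ∀ B ∈ 𝒞, A ∩ B ∈ 𝒞) :
    ∀ m ≥ 1, ∀ L ∈ DIFF 𝒞 m, ∃ Ls : List (Set α),
      Ls.length = m ∧ (∀ A ∈ Ls, A ∈ 𝒞) ∧ List.Chain' (· ⊇ ·) Ls ∧
      L = telescope Ls :=
  stmt11_general 𝒞 hinter
end

section
/- Upward collapse of the Boolean (difference) hierarchy: suppose 𝒞 ⊆ Set (Set α) is closed under binary unions and binary intersections, and suppose DIFF_m(𝒞) = coDIFF_m(𝒞) for some m ≥ 1. Then DIFF_{m+1}(𝒞) = DIFF_m(𝒞), and consequently DIFF_k(𝒞) = DIFF_m(𝒞) for all k ≥ m. -/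
def coClass {α : Type*} (𝒦 : Set (Set α)) : Set (Set α) := { L | Lᶜ ∈ 𝒦 }

/-!
Write `L₁ \ L₂ = L₁ ∩ L₂ᶜ`. Each level `DIFF 𝒞 k` with `k ≥ 1` is closed under intersection
with members of `𝒞`, so if it is also closed under complement then `L₁ \ L₂ ∈ DIFF 𝒞 k` for
`L₁ ∈ 𝒞`, `L₂ ∈ DIFF 𝒞 k`. Conversely every `L ∈ DIFF 𝒞 k` lies in some `A ∈ 𝒞`, and then
`L = A \ (A ∩ Lᶜ)`. Hence level `k + 1` equals level `k`; since each level is built from the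
previous one by the same rule, the hierarchy is constant from there on.
-/

section DifferenceHierarchy

variable {α : Type*} (𝒞 : Set (Set α))

theorem DIFF_succ {k : ℕ} (hk : 1 ≤ k) :
    DIFF 𝒞 (k + 1) = { L | ∃ L₁ ∈ 𝒞, ∃ L₂ ∈ DIFF 𝒞 k, L = L₁ \ L₂ } := by
  obtain ⟨j, rfl⟩ := Nat.exists_eq_add_of_le' hk
  rfl

theorem exists_superset_mem_of_mem_DIFF {k : ℕ} (hk : 1 ≤ k) {L : Set α}
    (hL : L ∈ DIFF 𝒞 k) : ∃ A ∈ 𝒞, L ⊆ A := by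
  induction k, hk using Nat.le_induction with
  | base => exact ⟨L, hL, subset_rfl⟩
  | succ k hk _ =>
    rw [DIFF_succ 𝒞 hk] at hL
    obtain ⟨L₁, hL₁, L₂, -, rfl⟩ := hL
    exact ⟨L₁, hL₁, Set.sdiff_subset⟩

variable {𝒞}

theorem inter_mem_DIFF (hinter : ∀ A ∈ 𝒞, ∀ B ∈ 𝒞, A ∩ B ∈ 𝒞) {k : ℕ} (hk : 1 ≤ k)
    {A B : Set α} (hA : A ∈ 𝒞) (hB : B ∈ DIFF 𝒞 k) : A ∩ B ∈ DIFF 𝒞 k := by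
  induction k, hk using Nat.le_induction generalizing B with
  | base => exact hinter A hA B hB
  | succ k hk _ =>
    rw [DIFF_succ 𝒞 hk] at hB ⊢
    obtain ⟨B₁, hB₁, B₂, hB₂, rfl⟩ := hB
    exact ⟨A ∩ B₁, hinter A hA B₁ hB₁, B₂, hB₂, (Set.inter_sdiff_assoc A B₁ B₂).symm⟩

theorem DIFF_succ_eq_of_compl_mem (hinter : ∀ A ∈ 𝒞, ∀ B ∈ 𝒞, A ∩ B ∈ 𝒞) {k : ℕ}
    (hk : 1 ≤ k) (hcompl : ∀ L ∈ DIFF 𝒞 k, Lᶜ ∈ DIFF 𝒞 k) : DIFF 𝒞 (k + 1) = DIFF 𝒞 k := by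
  rw [DIFF_succ 𝒞 hk]
  ext L
  constructor
  · rintro ⟨L₁, hL₁, L₂, hL₂, rfl⟩
    rw [Set.sdiff_eq]
    exact inter_mem_DIFF hinter hk hL₁ (hcompl L₂ hL₂)
  · intro hL
    obtain ⟨A, hA, hLA⟩ := exists_superset_mem_of_mem_DIFF 𝒞 hk hL
    refine ⟨A, hA, A ∩ Lᶜ, inter_mem_DIFF hinter hk hA (hcompl L hL), ?_⟩
    rw [Set.sdiff_self_inter, Set.sdiff_compl, Set.inter_eq_right.mpr hLA]

theorem DIFF_eq_of_le_of_DIFF_succ_eq {m : ℕ} (hm : 1 ≤ m)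
    (hstep : DIFF 𝒞 (m + 1) = DIFF 𝒞 m) {k : ℕ} (hk : m ≤ k) : DIFF 𝒞 k = DIFF 𝒞 m := by
  induction k, hk using Nat.le_induction with
  | base => rfl
  | succ k hk ih => rw [DIFF_succ 𝒞 (hm.trans hk), ih, ← DIFF_succ 𝒞 hm, hstep]

end DifferenceHierarchy

theorem stmt16_general {α : Type*} (𝒞 : Set (Set α))
    (hinter : ∀ A ∈ 𝒞, ∀ B ∈ 𝒞, A ∩ B ∈ 𝒞)
    (m : ℕ) (hm : 1 ≤ m) (hcoll : DIFF 𝒞 m = coClass (DIFF 𝒞 m)) :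
    DIFF 𝒞 (m + 1) = DIFF 𝒞 m ∧ ∀ k ≥ m, DIFF 𝒞 k = DIFF 𝒞 m := by
  have hcompl : ∀ L ∈ DIFF 𝒞 m, Lᶜ ∈ DIFF 𝒞 m := fun L hL => hcoll.subset hL
  have hstep := DIFF_succ_eq_of_compl_mem hinter hm hcompl
  exact ⟨hstep, fun k hk => DIFF_eq_of_le_of_DIFF_succ_eq hm hstep hk⟩

theorem stmt16 {α : Type*} (𝒞 : Set (Set α))
    (hunion : ∀ A ∈ 𝒞, ∀ B ∈ 𝒞, A ∪ B ∈ 𝒞)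
    (hinter : ∀ A ∈ 𝒞, ∀ B ∈ 𝒞, A ∩ B ∈ 𝒞)
    (m : ℕ) (hm : 1 ≤ m) (hcoll : DIFF 𝒞 m = coClass (DIFF 𝒞 m)) :
    DIFF 𝒞 (m + 1) = DIFF 𝒞 m ∧ ∀ k ≥ m, DIFF 𝒞 k = DIFF 𝒞 m :=
  stmt16_general 𝒞 hinter m hm hcoll
end

section
/- Let L₁ ⊇ ⋯ ⊇ L_m and L'₁ ⊇ ⋯ ⊇ L'_m be subsets of α, let L = L₁ \ (L₂ \ ⋯ (L_{m-1} \ L_m)) and L' = L'₁ \ (L'₂ \ ⋯ (L'_{m-1} \ L'_m)). Fix x, and let r' be the largest index with x ∈ L'_{r'} (r' = 0 if x ∉ L'₁). Suppose w ∈ α satisfies: w ∈ L_{r'} if r' > 0, and w ∉ L_s for all s > r'. Then x ∈ L' if and only if w ∈ L. -/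
/-!
A point lying in exactly the first `r` sets of a list lies in its telescoped difference iff `r`
is odd. Both `x` and `w` lie in exactly the first `r'` sets of their lists: for `x` this is the
hypothesis, for `w` it follows from `w ∈ L_{r'}` because the chain `L` is decreasing.
-/

section

variable {α : Type*}

@[simp]
theorem telescope_cons (L : Set α) (rest : List (Set α)) :
    telescope (L :: rest) = L \ telescope rest := by
  cases rest <;> simp [telescope]

theorem mem_telescope_iff_odd {y : α} {Ls : List (Set α)} {r : ℕ} (hr : r ≤ Ls.length)
    (hy : ∀ j < Ls.length, y ∈ Ls.getD j ∅ ↔ j < r) : y ∈ telescope Ls ↔ Odd r := by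
  induction Ls generalizing r with
  | nil => simp_all [telescope]
  | cons L rest ih =>
    cases r with
    | zero =>
      have hyL : y ∉ L := by simpa using hy 0 (by simp)
      simp [hyL]
    | succ k =>
      have hyL : y ∈ L := by simpa using hy 0 (by simp)
      have hrest : y ∈ telescope rest ↔ Odd k :=
        ih (by simpa using hr) fun j hj => by simpa using hy (j + 1) (by simpa using hj)
      simp [hyL, hrest, Nat.odd_add_one]

theorem List.IsChain.getD_subset_getD {Ls : List (Set α)} (h : Ls.IsChain (· ⊇ ·)) {j k : ℕ}
    (hjk : j ≤ k) : Ls.getD k ∅ ⊆ Ls.getD j ∅ := by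
  rcases lt_or_ge k Ls.length with hk | hk
  · rw [List.getD_eq_getElem _ _ hk, List.getD_eq_getElem _ _ (hjk.trans_lt hk)]
    exact (List.isChain_iff_pairwise.mp h).rel_get_of_le
      (a := ⟨j, hjk.trans_lt hk⟩) (b := ⟨k, hk⟩) hjk
  · rw [List.getD_eq_default _ _ hk]
    exact Set.empty_subset _

theorem List.IsChain.mem_getD_iff_lt {w : α} {Ls : List (Set α)} (h : Ls.IsChain (· ⊇ ·))
    {r : ℕ} (hin : 0 < r → w ∈ Ls.getD (r - 1) ∅)
    (hout : ∀ s, r ≤ s → s < Ls.length → w ∉ Ls.getD s ∅) :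
    ∀ j < Ls.length, w ∈ Ls.getD j ∅ ↔ j < r := fun j hj =>
  ⟨fun hw => by_contra fun hjr => hout j (not_lt.mp hjr) hj hw,
    fun hjr => h.getD_subset_getD (Nat.le_sub_one_of_lt hjr) (hin (by omega))⟩

end

theorem stmt18_general {α : Type*} (m : ℕ) (Ls Ls' : List (Set α))
    (hlen : Ls.length = m) (hlen' : Ls'.length = m)
    (hchain : List.Chain' (· ⊇ ·) Ls)
    (x : α) (r' : ℕ) (hr' : r' ≤ m)
    (hx : ∀ j < m, x ∈ Ls'.getD j ∅ ↔ j < r')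
    (w : α)
    (hw1 : r' > 0 → w ∈ Ls.getD (r' - 1) ∅)
    (hw2 : ∀ s, r' ≤ s → s < m → w ∉ Ls.getD s ∅) :
    (x ∈ telescope Ls' ↔ w ∈ telescope Ls) := by
  subst hlen
  have hw : ∀ j < Ls.length, w ∈ Ls.getD j ∅ ↔ j < r' :=
    hchain.mem_getD_iff_lt hw1 hw2
  rw [mem_telescope_iff_odd (hlen' ▸ hr') (hlen' ▸ hx), mem_telescope_iff_odd hr' hw]

theorem stmt18 {α : Type*} (m : ℕ) (Ls Ls' : List (Set α))
    (hlen : Ls.length = m) (hlen' : Ls'.length = m)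
    (hchain : List.Chain' (· ⊇ ·) Ls) (hchain' : List.Chain' (· ⊇ ·) Ls')
    (x : α) (r' : ℕ) (hr' : r' ≤ m)
    (hx : ∀ j < m, x ∈ Ls'.getD j ∅ ↔ j < r')
    (w : α)
    (hw1 : r' > 0 → w ∈ Ls.getD (r' - 1) ∅)
    (hw2 : ∀ s, r' ≤ s → s < m → w ∉ Ls.getD s ∅) :
    (x ∈ telescope Ls' ↔ w ∈ telescope Ls) :=
  stmt18_general m Ls Ls' hlen hlen' hchain x r' hr' hx w hw1 hw2
end
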